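/- Let G be a graph, B ∈ B(G), and let x ∈ Δ_n be a minimizer of x^T B x over Δ_n (i.e., x^T B x = 1/α(G)). Then every edge of the induced subgraph G[supp(x)] is a critical edge of G. -/

import Mathlib

/-!
For every `B ∈ B(G)` and `y ∈ Δ` we have `yᵀBy ≥ 1/α(G)`. Along the direction `e_i - e_j` of an
edge `ij` inside the support of `y` the form is concave (`(e_i - e_j)ᵀB(e_i - e_j) =
2 - B_ij - B_ji ≤ 0`), so all the mass of `i` or of `j` can be moved to the other endpoint without
increasing it. Repeating this, we reach a point whose support `S` is stable, where the form equals
`∑ y_p² ≥ 1/|S| ≥ 1/α(G)` by Cauchy–Schwarz.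

Deleting an edge raises `α` by at most one. If an edge `ij` of `G[supp x]` were not critical, then
`α(G - ij) = α(G)`, and zeroing `B_ij` and `B_ji` gives a matrix of `B(G - ij)` whose form at `x` is
`1/α(G) - x_i (B_ij + B_ji) x_j < 1/α(G - ij)`, contradicting the bound.
-/

open Finset Matrix

noncomputable def alpha {V : Type*} [Fintype V] (G : SimpleGraph V) : ℕ :=
  sSup {k | ∃ S : Finset V, (∀ i ∈ S, ∀ j ∈ S, ¬ G.Adj i j) ∧ S.card = k}

namespace SimpleGraph

variable {V : Type*} {G : SimpleGraph V}

lemma alpha_eq_indepNum [Fintype V] (G : SimpleGraph V) : alpha G = G.indepNum := by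
  unfold alpha indepNum
  congr! 3 with k
  refine exists_congr fun S => ?_
  rw [isNIndepSet_iff, isIndepSet_iff]
  refine and_congr_left' ⟨fun h a ha b hb _ => h a ha b hb, fun h a ha b hb hab => ?_⟩
  exact h ha hb hab.ne hab

lemma indepNum_anti [Finite V] : Antitone (indepNum : SimpleGraph V → ℕ) := by
  intro H G h
  obtain ⟨S, hS⟩ := G.exists_isNIndepSet_indepNum
  rw [← hS.card_eq]
  exact IsIndepSet.card_le_indepNum <| hS.isIndepSet.mono' fun _ _ hG hH => hG (h hH)

lemma indepNum_deleteEdge_le [Finite V] [DecidableEq V] (i j : V) :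
    (G.deleteEdges {s(i, j)}).indepNum ≤ G.indepNum + 1 := by
  obtain ⟨S, hS⟩ := (G.deleteEdges {s(i, j)}).exists_isNIndepSet_indepNum
  have hind : G.IsIndepSet ↑(S.erase i) := by
    intro a ha b hb hab hadj
    simp only [coe_erase, Set.mem_sdiff, Set.mem_singleton_iff, mem_coe] at ha hb
    refine hS.isIndepSet ha.1 hb.1 hab <| (G.deleteEdges_adj ..).2 ⟨hadj, fun hab' => ?_⟩
    rcases Sym2.eq_iff.1 hab' with ⟨rfl, -⟩ | ⟨-, rfl⟩
    exacts [ha.2 rfl, hb.2 rfl]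
  have := hind.card_le_indepNum
  have := S.pred_card_le_card_erase (a := i)
  have := hS.card_eq
  omega

end SimpleGraph

namespace Matrix

variable {V R : Type*}

lemma sub_single_sub_single_apply [DecidableEq V] [AddCommGroup R] (B : Matrix V V R) {i j : V}
    (hij : i ≠ j) (p q : V) :
    (B - single i j (B i j) - single j i (B j i)) p q = if s(p, q) = s(i, j) then 0 else B p q := by
  simp only [Matrix.sub_apply, single_apply, Sym2.eq_iff]
  split_ifs <;> grind

variable [Fintype V] [CommRing R]

lemma dotProduct_mulVec_add_smul (B : Matrix V V R) (y d : V → R) (t : R) :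
    (y + t • d) ⬝ᵥ (B *ᵥ (y + t • d)) =
      y ⬝ᵥ (B *ᵥ y) + t * (d ⬝ᵥ (B *ᵥ y) + y ⬝ᵥ (B *ᵥ d)) + t ^ 2 * (d ⬝ᵥ (B *ᵥ d)) := by
  simp only [mulVec_add, mulVec_smul, add_dotProduct, dotProduct_add, smul_dotProduct,
    dotProduct_smul, smul_eq_mul]
  ring

variable [DecidableEq V]

lemma dotProduct_single_mulVec (x : V → R) (i j : V) (c : R) :
    x ⬝ᵥ (single i j c *ᵥ x) = x i * c * x j := by
  simp only [single_mulVec_eq, dotProduct_smul, dotProduct_single, mul_one, smul_eq_mul]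
  ring

lemma dotProduct_mulVec_single_sub_single (B : Matrix V V R) (i j : V) :
    (Pi.single i 1 - Pi.single j 1) ⬝ᵥ (B *ᵥ (Pi.single i 1 - Pi.single j 1)) =
      B i i - B i j - B j i + B j j := by
  simp only [mulVec_sub, mulVec_single, MulOpposite.op_one, one_smul, dotProduct_sub,
    sub_dotProduct, single_dotProduct, col_apply, one_mul]
  ring

end Matrix

section Transfer

variable {V : Type*} [DecidableEq V]

lemma add_smul_single_sub_single_apply {R : Type*} [Ring R] (y : V → R) {i j : V} (hij : i ≠ j)
    (t : R) (p : V) :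
    (y + t • (Pi.single i 1 - Pi.single j 1) : V → R) p =
      if p = i then y i + t else if p = j then y j - t else y p := by
  by_cases hpi : p = i
  · simp [hpi, hij]
  · by_cases hpj : p = j
    · subst hpj; simp [hij.symm, sub_eq_add_neg]
    · simp [hpi, hpj]

variable [Fintype V]

lemma add_smul_single_sub_single_mem_stdSimplex {y : V → ℝ} (hy : y ∈ stdSimplex ℝ V)
    {i j : V} (hij : i ≠ j) {t : ℝ} (hti : -y i ≤ t) (htj : t ≤ y j) :
    y + t • (Pi.single i 1 - Pi.single j 1) ∈ stdSimplex ℝ V := by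
  refine ⟨fun p => ?_, ?_⟩
  · rw [add_smul_single_sub_single_apply y hij]
    split_ifs
    · linarith
    · linarith
    · exact hy.1 p
  · simp [sum_add_distrib, ← mul_sum, hy.2]

lemma card_support_add_smul_single_sub_single_lt {y : V → ℝ} {i j : V} (hij : i ≠ j)
    (hi : y i ≠ 0) (hj : y j ≠ 0) {t : ℝ} (ht : t = y j ∨ t = -y i) :
    #{p | (y + t • (Pi.single i 1 - Pi.single j 1) : V → ℝ) p ≠ 0} < #{p | y p ≠ 0} := by
  simp only [add_smul_single_sub_single_apply y hij]
  refine card_lt_card <| (ssubset_iff_of_subset fun p => ?_).2 ?_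
  · simp only [mem_filter, mem_univ, true_and]
    split_ifs with hpi hpj
    exacts [fun _ => hpi ▸ hi, fun _ => hpj ▸ hj, id]
  · rcases ht with rfl | rfl
    · exact ⟨j, by simp [hj, hij.symm]⟩
    · exact ⟨i, by simp [hi]⟩

end Transfer

namespace SimpleGraph

variable {V : Type*} {G : SimpleGraph V} {B : Matrix V V ℝ}

/-- `B ∈ B(G)` in the paper's notation. -/
structure IsBMatrix (G : SimpleGraph V) (B : Matrix V V ℝ) : Prop where
  apply_self : ∀ i, B i i = 1
  one_le_apply : ∀ i j, G.Adj i j → 1 ≤ B i j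
  apply_eq_zero : ∀ i j, i ≠ j → ¬ G.Adj i j → B i j = 0

lemma IsBMatrix.deleteEdge [DecidableEq V] (hB : G.IsBMatrix B) {i j : V} (hij : G.Adj i j) :
    (G.deleteEdges {s(i, j)}).IsBMatrix (B - single i j (B i j) - single j i (B j i)) := by
  refine ⟨fun p => ?_, fun p q hpq => ?_, fun p q hpq hnadj => ?_⟩ <;>
    rw [sub_single_sub_single_apply B hij.ne]
  · rw [if_neg fun h => hij.ne <| by rcases Sym2.eq_iff.1 h with ⟨rfl, rfl⟩ | ⟨rfl, rfl⟩ <;> rfl,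
      hB.apply_self]
  · rw [deleteEdges_adj, Set.mem_singleton_iff] at hpq
    rw [if_neg hpq.2]
    exact hB.one_le_apply p q hpq.1
  · rw [deleteEdges_adj, Set.mem_singleton_iff] at hnadj
    split_ifs with h
    · rfl
    · exact hB.apply_eq_zero p q hpq fun hadj => hnadj ⟨hadj, h⟩

variable [Fintype V]

lemma IsBMatrix.dotProduct_mulVec_eq_sum_sq (hB : G.IsBMatrix B) {z : V → ℝ}
    (hz : G.IsIndepSet {p | z p ≠ 0}) : z ⬝ᵥ (B *ᵥ z) = ∑ p, z p ^ 2 := by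
  refine sum_congr rfl fun p _ => ?_
  by_cases hp : z p = 0
  · simp [hp]
  rw [mulVec, dotProduct, sum_eq_single p, hB.apply_self, sq, one_mul]
  · intro q _ hqp
    by_cases hq : z q = 0
    · rw [hq, mul_zero]
    · rw [hB.apply_eq_zero p q hqp.symm (hz hp hq hqp.symm), zero_mul]
  · simp

lemma IsBMatrix.one_div_indepNum_le_of_isIndepSet (hB : G.IsBMatrix B) {z : V → ℝ}
    (hz : z ∈ stdSimplex ℝ V) (hind : G.IsIndepSet {p | z p ≠ 0}) :
    1 / (G.indepNum : ℝ) ≤ z ⬝ᵥ (B *ᵥ z) := by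
  set S : Finset V := {p | z p ≠ 0}
  have hsum : ∑ p ∈ S, z p = 1 := by
    rw [← hz.2]
    exact sum_filter_ne_zero _
  have hS : 0 < #S := card_pos.2 <| nonempty_of_sum_ne_zero (by rw [hsum]; norm_num)
  have hSα : #S ≤ G.indepNum := IsIndepSet.card_le_indepNum (by simpa [S] using hind)
  have hcs := sq_sum_le_card_mul_sum_sq (s := S) (f := z)
  rw [hsum, one_pow] at hcs
  have hsq : ∑ p ∈ S, z p ^ 2 = ∑ p, z p ^ 2 :=
    sum_subset (subset_univ S) fun p _ hp => by simp [S] at hp; simp [hp]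
  have hα : (0 : ℝ) < G.indepNum := by exact_mod_cast hS.trans_le hSα
  rw [hB.dotProduct_mulVec_eq_sum_sq hind, ← hsq, div_le_iff₀ hα]
  calc (1 : ℝ) ≤ #S * ∑ p ∈ S, z p ^ 2 := hcs
    _ ≤ (∑ p ∈ S, z p ^ 2) * G.indepNum := by rw [mul_comm]; gcongr

variable [DecidableEq V]

lemma IsBMatrix.exists_card_support_lt (hB : G.IsBMatrix B) {y : V → ℝ}
    (hy : y ∈ stdSimplex ℝ V) {i j : V} (hij : G.Adj i j) (hi : y i ≠ 0) (hj : y j ≠ 0) :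
    ∃ z ∈ stdSimplex ℝ V, #{p | z p ≠ 0} < #{p | y p ≠ 0} ∧
      z ⬝ᵥ (B *ᵥ z) ≤ y ⬝ᵥ (B *ᵥ y) := by
  set d : V → ℝ := Pi.single i 1 - Pi.single j 1
  set c := d ⬝ᵥ (B *ᵥ y) + y ⬝ᵥ (B *ᵥ d)
  have hq : d ⬝ᵥ (B *ᵥ d) ≤ 0 := by
    rw [dotProduct_mulVec_single_sub_single, hB.apply_self, hB.apply_self]
    linarith [hB.one_le_apply i j hij, hB.one_le_apply j i hij.symm]
  obtain ⟨t, ht, hct⟩ : ∃ t, (t = y j ∨ t = -y i) ∧ t * c ≤ 0 := by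
    rcases le_total c 0 with hc | hc
    · exact ⟨y j, .inl rfl, mul_nonpos_of_nonneg_of_nonpos (hy.1 j) hc⟩
    · exact ⟨-y i, .inr rfl, by nlinarith [hy.1 i]⟩
  refine ⟨y + t • d, ?_, card_support_add_smul_single_sub_single_lt hij.ne hi hj ht, ?_⟩
  · have := hy.1 i
    have := hy.1 j
    rcases ht with rfl | rfl
    · exact add_smul_single_sub_single_mem_stdSimplex hy hij.ne (by linarith) le_rfl
    · exact add_smul_single_sub_single_mem_stdSimplex hy hij.ne le_rfl (by linarith)
  · rw [dotProduct_mulVec_add_smul]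
    nlinarith [sq_nonneg t]

lemma IsBMatrix.exists_isIndepSet_support_le (hB : G.IsBMatrix B) {y : V → ℝ}
    (hy : y ∈ stdSimplex ℝ V) :
    ∃ z ∈ stdSimplex ℝ V, G.IsIndepSet {p | z p ≠ 0} ∧ z ⬝ᵥ (B *ᵥ z) ≤ y ⬝ᵥ (B *ᵥ y) := by
  induction hk : #{p | y p ≠ 0} using Nat.strong_induction_on generalizing y with
  | _ k ih =>
  by_cases hind : G.IsIndepSet {p | y p ≠ 0}
  · exact ⟨y, hy, hind, le_rfl⟩
  obtain ⟨i, hi, j, hj, -, hij⟩ : ∃ i, y i ≠ 0 ∧ ∃ j, y j ≠ 0 ∧ i ≠ j ∧ G.Adj i j := by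
    simpa [IsIndepSet, Set.Pairwise] using hind
  obtain ⟨w, hw, hcard, hle⟩ := hB.exists_card_support_lt hy hij hi hj
  obtain ⟨z, hz, hzind, hzle⟩ := ih _ (hk ▸ hcard) hw rfl
  exact ⟨z, hz, hzind, hzle.trans hle⟩

theorem IsBMatrix.one_div_indepNum_le (hB : G.IsBMatrix B) {y : V → ℝ}
    (hy : y ∈ stdSimplex ℝ V) : 1 / (G.indepNum : ℝ) ≤ y ⬝ᵥ (B *ᵥ y) := by
  obtain ⟨z, hz, hind, hle⟩ := hB.exists_isIndepSet_support_le hy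
  exact (hB.one_div_indepNum_le_of_isIndepSet hz hind).trans hle

end SimpleGraph

theorem minimizer_support_edges_critical_general {n : ℕ} (G : SimpleGraph (Fin n))
    (B : Matrix (Fin n) (Fin n) ℝ)
    (hdiag : ∀ i, B i i = 1)
    (hedge : ∀ i j, G.Adj i j → 1 ≤ B i j)
    (hnonedge : ∀ i j, i ≠ j → ¬ G.Adj i j → B i j = 0)
    (x : Fin n → ℝ) (hx : x ∈ stdSimplex ℝ (Fin n))
    (hmin : x ⬝ᵥ (B *ᵥ x) = 1 / (alpha G : ℝ)) :
    ∀ i j, 0 < x i → 0 < x j → G.Adj i j →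
      alpha (G.deleteEdges {s(i, j)}) = alpha G + 1 := by
  intro i j hxi hxj hij
  simp only [SimpleGraph.alpha_eq_indepNum] at hmin ⊢
  refine (G.indepNum_deleteEdge_le i j).antisymm (Nat.succ_le_of_lt ?_)
  refine (SimpleGraph.indepNum_anti (G.deleteEdges_le _)).lt_of_ne fun heq => ?_
  have hB : G.IsBMatrix B := ⟨hdiag, hedge, hnonedge⟩
  have hlow := (hB.deleteEdge hij).one_div_indepNum_le hx
  simp only [← heq, sub_mulVec, dotProduct_sub, dotProduct_single_mulVec, ← hmin] at hlow
  nlinarith [hedge i j hij, hedge j i hij.symm, mul_pos hxi hxj]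

/-- If `x ∈ Δ_n` is a minimizer of `xᵀBx` for some `B ∈ B(G)`, then every edge of the
subgraph induced on the support of `x` is a critical edge of `G`. -/
theorem minimizer_support_edges_critical {n : ℕ} (G : SimpleGraph (Fin n))
    (B : Matrix (Fin n) (Fin n) ℝ) (hsymm : B.IsSymm)
    (hdiag : ∀ i, B i i = 1)
    (hedge : ∀ i j, G.Adj i j → 1 ≤ B i j)
    (hnonedge : ∀ i j, i ≠ j → ¬ G.Adj i j → B i j = 0)
    (x : Fin n → ℝ) (hx : x ∈ stdSimplex ℝ (Fin n))
    (hmin : x ⬝ᵥ (B *ᵥ x) = 1 / (alpha G : ℝ)) :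
    ∀ i j, 0 < x i → 0 < x j → G.Adj i j →
      alpha (G.deleteEdges {s(i, j)}) = alpha G + 1 :=
  minimizer_support_edges_critical_general G B hdiag hedge hnonedge x hx hmin
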